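/- Let L : [t₀-ε, t₀+ε] → Sym(V) be a real-analytic curve of symmetric operators on a finite-dimensional real inner product space V, having a unique degeneracy instant at t₀ and admitting smooth eigenvalue functions λ_i and smooth orthonormal eigenvector fields as in the diagonalization hypothesis. Then n⁺(L(t₀+ε)) − n⁺(L(t₀)) = Σ_{k≥1} n⁺(B_k), n⁺(L(t₀)) − n⁺(L(t₀−ε)) = −Σ_{k≥1}(n⁻(B_{2k-1}) + n⁺(B_{2k})), and n⁺(L(t₀+ε)) − n⁺(L(t₀−ε)) = Σ_{k≥1} σ(B_{2k-1}), where all sums are finite. -/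

import Mathlib

open scoped RealInnerProductSpace

/-- A root function of order at least `k` for the curve `L` at `t₀`: a smooth map `u` with
`u t₀ ∈ Ker (L t₀)` such that `t ↦ L t (u t)` vanishes to order at least `k` at `t₀`. -/
def IsRootFn {E : Type*} [NormedAddCommGroup E] [InnerProductSpace ℝ E]
    (L : ℝ → E →L[ℝ] E) (t₀ : ℝ) (k : ℕ) (u : ℝ → E) : Prop :=
  ContDiff ℝ (⊤ : ℕ∞) u ∧ L t₀ (u t₀) = 0 ∧
    ∀ j < k, iteratedDeriv j (fun t => L t (u t)) t₀ = 0

/-- `Wk L t₀ k` is the set of values `u t₀` of root functions of order at least `k`. -/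
def Wk {E : Type*} [NormedAddCommGroup E] [InnerProductSpace ℝ E]
    (L : ℝ → E →L[ℝ] E) (t₀ : ℝ) (k : ℕ) : Set E :=
  {u₀ | ∃ u : ℝ → E, IsRootFn L t₀ k u ∧ u t₀ = u₀}

/-- The coindex of (the restriction to `W` of) a form `B`: the largest dimension of a
subspace contained in `W` on which `B` is positive definite. -/
noncomputable def posIndexOn {V : Type*} [AddCommGroup V] [Module ℝ V]
    (B : V → V → ℝ) (W : Set V) : ℕ :=
  sSup {n : ℕ | ∃ S : Submodule ℝ V, (S : Set V) ⊆ W ∧ Module.finrank ℝ S = n ∧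
    ∀ x ∈ S, x ≠ 0 → 0 < B x x}

/-- The index of (the restriction to `W` of) a form `B`. -/
noncomputable def negIndexOn {V : Type*} [AddCommGroup V] [Module ℝ V]
    (B : V → V → ℝ) (W : Set V) : ℕ :=
  sSup {n : ℕ | ∃ S : Submodule ℝ V, (S : Set V) ⊆ W ∧ Module.finrank ℝ S = n ∧
    ∀ x ∈ S, x ≠ 0 → B x x < 0}

-- ===== auxiliary lemmas =====


section AuxBil

variable {E F G : Type*} [NormedAddCommGroup E] [NormedSpace ℝ E]
  [NormedAddCommGroup F] [NormedSpace ℝ F] [NormedAddCommGroup G] [NormedSpace ℝ G]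

lemma ContDiff.derivAux {f : ℝ → E} (hf : ContDiff ℝ (⊤ : ℕ∞) f) : ContDiff ℝ (⊤ : ℕ∞) (deriv f) := by
  have h : ContDiff ℝ (((⊤ : ℕ∞) : WithTop ℕ∞) + 1) f := by
    rwa [show (((⊤ : ℕ∞) : WithTop ℕ∞) + 1) = ((⊤ : ℕ∞) : WithTop ℕ∞) from rfl]
  exact (contDiff_succ_iff_deriv.mp h).2.2

lemma iteratedDeriv_add' {n : ℕ} {f g : ℝ → E} (hf : ContDiff ℝ (⊤ : ℕ∞) f) (hg : ContDiff ℝ (⊤ : ℕ∞) g)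
    (x : ℝ) :
    iteratedDeriv n (fun t => f t + g t) x = iteratedDeriv n f x + iteratedDeriv n g x := by
  rw [← iteratedDerivWithin_univ, ← iteratedDerivWithin_univ, ← iteratedDerivWithin_univ]
  exact iteratedDerivWithin_add (Set.mem_univ x) uniqueDiffOn_univ
    ((hf.of_le (by exact_mod_cast le_top)).contDiffWithinAt) ((hg.of_le (by exact_mod_cast le_top)).contDiffWithinAt)

lemma contDiff_bil (B : E →L[ℝ] F →L[ℝ] G) {f : ℝ → E} {g : ℝ → F}
    (hf : ContDiff ℝ (⊤ : ℕ∞) f) (hg : ContDiff ℝ (⊤ : ℕ∞) g) :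
    ContDiff ℝ (⊤ : ℕ∞) (fun t => B (f t) (g t)) :=
  (B.contDiff.comp hf).clm_apply hg

lemma hasDerivAt_bil (B : E →L[ℝ] F →L[ℝ] G) {f : ℝ → E} {g : ℝ → F}
    (hf : ContDiff ℝ (⊤ : ℕ∞) f) (hg : ContDiff ℝ (⊤ : ℕ∞) g) (t : ℝ) :
    HasDerivAt (fun t => B (f t) (g t))
      (B (deriv f t) (g t) + B (f t) (deriv g t)) t := by
  have hf' := (hf.differentiable (by simp) t).hasDerivAt
  have hg' := (hg.differentiable (by simp) t).hasDerivAt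
  have hc : HasDerivAt (fun t => B (f t)) (B (deriv f t)) t :=
    B.hasFDerivAt.comp_hasDerivAt t hf'
  exact hc.clm_apply hg'

/-- If all derivatives of `f` up to order `j` vanish at `t₀`, then the `j`-th derivative of
`t ↦ B (f t) (g t)` vanishes at `t₀`. -/
lemma iteratedDeriv_bil_zero (B : E →L[ℝ] F →L[ℝ] G) {t₀ : ℝ} :
    ∀ (j : ℕ) (f : ℝ → E) (g : ℝ → F), ContDiff ℝ (⊤ : ℕ∞) f → ContDiff ℝ (⊤ : ℕ∞) g →
      (∀ a ≤ j, iteratedDeriv a f t₀ = 0) →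
      iteratedDeriv j (fun t => B (f t) (g t)) t₀ = 0 := by
  intro j
  induction j with
  | zero =>
    intro f g hf hg h0
    have hf0 : f t₀ = 0 := by simpa [iteratedDeriv_zero] using h0 0 le_rfl
    simp [iteratedDeriv_zero, hf0]
  | succ j ih =>
    intro f g hf hg h0
    rw [iteratedDeriv_succ']
    have hd : deriv (fun t => B (f t) (g t))
        = fun t => B (deriv f t) (g t) + B (f t) (deriv g t) :=
      funext fun t => (hasDerivAt_bil B hf hg t).deriv
    rw [hd]
    rw [iteratedDeriv_add' (contDiff_bil B hf.derivAux hg) (contDiff_bil B hf hg.derivAux)]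
    have e1 : iteratedDeriv j (fun t => B (deriv f t) (g t)) t₀ = 0 :=
      ih (deriv f) g hf.derivAux hg (fun a ha => by
        have : iteratedDeriv a (deriv f) t₀ = iteratedDeriv (a+1) f t₀ := by
          rw [iteratedDeriv_succ']
        rw [this]; exact h0 (a+1) (by omega))
    have e2 : iteratedDeriv j (fun t => B (f t) (deriv g t)) t₀ = 0 :=
      ih f (deriv g) hf hg.derivAux (fun a ha => h0 a (by omega))
    rw [e1, e2, add_zero]

/-- If all derivatives of `f` of order `< k` vanish at `t₀`, the `k`-th derivative of
`t ↦ B (f t) (g t)` at `t₀` is `B (f⁽ᵏ⁾ t₀) (g t₀)`. -/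
lemma iteratedDeriv_bil_eq (B : E →L[ℝ] F →L[ℝ] G) {t₀ : ℝ} :
    ∀ (k : ℕ) (f : ℝ → E) (g : ℝ → F), ContDiff ℝ (⊤ : ℕ∞) f → ContDiff ℝ (⊤ : ℕ∞) g →
      (∀ a < k, iteratedDeriv a f t₀ = 0) →
      iteratedDeriv k (fun t => B (f t) (g t)) t₀ = B (iteratedDeriv k f t₀) (g t₀) := by
  intro k
  induction k with
  | zero => intro f g hf hg h0; simp [iteratedDeriv_zero]
  | succ k ih =>
    intro f g hf hg h0
    rw [iteratedDeriv_succ']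
    have hd : deriv (fun t => B (f t) (g t))
        = fun t => B (deriv f t) (g t) + B (f t) (deriv g t) :=
      funext fun t => (hasDerivAt_bil B hf hg t).deriv
    rw [hd]
    rw [iteratedDeriv_add' (contDiff_bil B hf.derivAux hg) (contDiff_bil B hf hg.derivAux)]
    have e2 : iteratedDeriv k (fun t => B (f t) (deriv g t)) t₀ = 0 :=
      iteratedDeriv_bil_zero B k f (deriv g) hf hg.derivAux (fun a ha => h0 a (by omega))
    have e1 : iteratedDeriv k (fun t => B (deriv f t) (g t)) t₀
        = B (iteratedDeriv k (deriv f) t₀) (g t₀) :=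
      ih (deriv f) g hf.derivAux hg (fun a ha => by
        have : iteratedDeriv a (deriv f) t₀ = iteratedDeriv (a+1) f t₀ := by
          rw [iteratedDeriv_succ']
        rw [this]; exact h0 (a+1) (by omega))
    rw [e1, e2, add_zero, ← iteratedDeriv_succ']

end AuxBil

lemma negIndexOn_eq {V : Type*} [AddCommGroup V] [Module ℝ V] (B : V → V → ℝ) (W : Set V) :
    negIndexOn B W = posIndexOn (fun x y => -B x y) W := by
  unfold negIndexOn posIndexOn
  congr 1
  ext n
  simp only [Set.mem_setOf_eq, neg_pos]

lemma posIndexOn_diag {E : Type*} [NormedAddCommGroup E] [InnerProductSpace ℝ E]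
    [FiniteDimensional ℝ E] {ι : Type*} [Fintype ι] [DecidableEq ι]
    {w : ι → E} (hw : Orthonormal ℝ w) (d : ι → ℝ) [DecidablePred fun i => 0 < d i]
    (M : Submodule ℝ E) (B : E → E → ℝ)
    (hB : ∀ x ∈ M, B x x = ∑ i, d i * ⟪x, w i⟫ ^ 2)
    (hM : ∀ i, 0 < d i → w i ∈ M) :
    posIndexOn B (M : Set E) = (Finset.univ.filter fun i => 0 < d i).card := by
  classical
  set P := {i : ι // 0 < d i}
  have hcardP : Fintype.card P = (Finset.univ.filter fun i => 0 < d i).card :=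
    Fintype.card_subtype _
  set S₀ : Submodule ℝ E := Submodule.span ℝ (Set.range fun p : P => w p.1) with hS₀def
  have hon : Orthonormal ℝ fun p : P => w p.1 := hw.comp _ Subtype.val_injective
  have hrank0 : Module.finrank ℝ S₀ = Fintype.card P :=
    finrank_span_eq_card hon.linearIndependent
  have hS₀M : (S₀ : Set E) ⊆ (M : Set E) := by
    rw [hS₀def]
    refine Submodule.span_le.mpr ?_
    rintro x ⟨p, rfl⟩
    exact hM p.1 p.2
  -- orthogonality of elements of S₀ to the non-positive directions
  have horth : ∀ x ∈ S₀, ∀ i : ι, ¬ 0 < d i → ⟪w i, x⟫ = 0 := by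
    intro x hx i hi
    have hker : S₀ ≤ LinearMap.ker (innerSL ℝ (w i) : E →ₗ[ℝ] ℝ) := by
      rw [hS₀def]
      refine Submodule.span_le.mpr ?_
      rintro y ⟨p, rfl⟩
      have hne : i ≠ p.1 := by
        intro h; exact hi (h ▸ p.2)
      simp only [SetLike.mem_coe, LinearMap.mem_ker, ContinuousLinearMap.coe_coe,
        innerSL_apply_apply]
      simpa [hne] using (orthonormal_iff_ite.mp hw) i p.1
    have := hker hx
    simpa using this
  -- the upper bound
  have hub : ∀ n ∈ {n : ℕ | ∃ S : Submodule ℝ E, (S : Set E) ⊆ (M : Set E) ∧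
      Module.finrank ℝ S = n ∧ ∀ x ∈ S, x ≠ 0 → 0 < B x x}, n ≤ Fintype.card P := by
    rintro n ⟨S, hSM, hrk, hpos⟩
    let φ : S →ₗ[ℝ] (P → ℝ) :=
      LinearMap.pi fun p : P => ((innerSL ℝ (w p.1)).toLinearMap).comp S.subtype
    have hinj : Function.Injective φ := by
      rw [← LinearMap.ker_eq_bot, LinearMap.ker_eq_bot']
      intro x hx
      by_contra hx0
      have hxE : (x : E) ≠ 0 := by
        simpa [Submodule.coe_eq_zero] using hx0
      have hBx : 0 < B (x : E) (x : E) := hpos x x.2 hxE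
      have hc : ∀ p : P, ⟪w p.1, (x : E)⟫ = 0 := by
        intro p
        have := congrFun hx p
        simpa [φ] using this
      have hle : B (x : E) (x : E) ≤ 0 := by
        rw [hB (x : E) (hSM x.2)]
        apply Finset.sum_nonpos
        intro i _
        by_cases hdi : 0 < d i
        · have : ⟪(x : E), w i⟫ = 0 := by
            rw [real_inner_comm]; exact hc ⟨i, hdi⟩
          simp [this]
        · have hd : d i ≤ 0 := not_lt.mp hdi
          have : (0:ℝ) ≤ ⟪(x : E), w i⟫ ^ 2 := sq_nonneg _
          exact mul_nonpos_of_nonpos_of_nonneg hd this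
      linarith
    have := LinearMap.finrank_le_finrank_of_injective hinj
    rw [hrk] at this
    simpa [Module.finrank_fintype_fun_eq_card] using this
  -- the witness
  have hwitness : Fintype.card P ∈ {n : ℕ | ∃ S : Submodule ℝ E, (S : Set E) ⊆ (M : Set E) ∧
      Module.finrank ℝ S = n ∧ ∀ x ∈ S, x ≠ 0 → 0 < B x x} := by
    refine ⟨S₀, hS₀M, hrank0, ?_⟩
    intro x hx hx0
    rw [hB x (hS₀M hx)]
    have hterm : ∀ i : ι, ¬ 0 < d i → d i * ⟪x, w i⟫ ^ 2 = 0 := by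
      intro i hi
      have : ⟪x, w i⟫ = 0 := by rw [real_inner_comm]; exact horth x hx i hi
      simp [this]
    have hnonneg : ∀ i ∈ Finset.univ, (0:ℝ) ≤ d i * ⟪x, w i⟫ ^ 2 := by
      intro i _
      by_cases hdi : 0 < d i
      · positivity
      · rw [hterm i hdi]
    have hex : ∃ i ∈ Finset.univ, (0:ℝ) < d i * ⟪x, w i⟫ ^ 2 := by
      by_contra hno
      push_neg at hno
      have hzero : ∀ p : P, ⟪x, w p.1⟫ = 0 := by
        intro p
        have h1 := hno p.1 (Finset.mem_univ _)
        have h2 := hnonneg p.1 (Finset.mem_univ _)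
        have : d p.1 * ⟪x, w p.1⟫ ^ 2 = 0 := le_antisymm h1 h2
        have := (mul_eq_zero.mp this).resolve_left (ne_of_gt p.2)
        exact pow_eq_zero_iff (n := 2) (by norm_num) |>.mp this
      have hxx : ⟪x, x⟫ = 0 := by
        have hker : S₀ ≤ LinearMap.ker (innerSL ℝ x : E →ₗ[ℝ] ℝ) := by
          rw [hS₀def]
          refine Submodule.span_le.mpr ?_
          rintro y ⟨p, rfl⟩
          simpa using hzero p
        simpa using hker hx
      exact hx0 (inner_self_eq_zero.mp hxx)
    exact Finset.sum_pos' hnonneg hex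
  unfold posIndexOn
  rw [← hcardP]
  apply le_antisymm
  · exact csSup_le ⟨_, hwitness⟩ hub
  · exact le_csSup ⟨Fintype.card P, hub⟩ hwitness


section AuxTaylor

lemma iteratedDerivWithin_eq_iteratedDeriv' {f : ℝ → ℝ} (hf : ContDiff ℝ (⊤ : ℕ∞) f) {s : Set ℝ}
    (hs : UniqueDiffOn ℝ s) {x : ℝ} (hx : x ∈ s) (n : ℕ) :
    iteratedDerivWithin n f s x = iteratedDeriv n f x := by
  rw [iteratedDerivWithin_eq_iteratedFDerivWithin, iteratedDeriv_eq_iteratedFDeriv]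
  have h1 : HasFTaylorSeriesUpTo (⊤ : ℕ∞) f (ftaylorSeries ℝ f) :=
    contDiff_iff_ftaylorSeries.mp (hf.of_le (by simp))
  have h2 : HasFTaylorSeriesUpToOn (⊤ : ℕ∞) f (ftaylorSeries ℝ f) s :=
    (hasFTaylorSeriesUpToOn_univ_iff.mpr h1).mono (Set.subset_univ s)
  have h3 := h2.eq_iteratedFDerivWithin_of_uniqueDiffOn (m := n) (by exact_mod_cast le_top) hs hx
  rw [← h3]
  rfl

lemma sign_iff_of_close {a b : ℝ} (h : |a - b| < |b|) : (0 < a ↔ 0 < b) := by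
  obtain ⟨h1, h2⟩ := abs_sub_lt_iff.mp h
  rcases lt_or_ge 0 b with hb | hb
  · rw [abs_of_pos hb] at h1 h2
    constructor <;> intro <;> linarith
  · rw [abs_of_nonpos hb] at h1 h2
    constructor <;> intro <;> linarith

lemma sign_const_of_ne_zero {f : ℝ → ℝ} (hf : Continuous f) {a b : ℝ} (hab : a ≤ b)
    (h : ∀ t ∈ Set.Icc a b, f t ≠ 0) : (0 < f a ↔ 0 < f b) := by
  constructor
  · intro hpos
    by_contra hneg
    have hfb : f b < 0 := lt_of_le_of_ne (not_lt.mp hneg)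
      (h b (Set.mem_Icc.mpr ⟨hab, le_refl b⟩))
    have h0 : (0:ℝ) ∈ Set.Icc (f b) (f a) := ⟨le_of_lt hfb, le_of_lt hpos⟩
    obtain ⟨t, ht, hft⟩ := intermediate_value_Icc' hab hf.continuousOn h0
    exact h t ht hft
  · intro hpos
    by_contra hneg
    have hfa : f a < 0 := lt_of_le_of_ne (not_lt.mp hneg)
      (h a (Set.mem_Icc.mpr ⟨le_refl a, hab⟩))
    have h0 : (0:ℝ) ∈ Set.Icc (f a) (f b) := ⟨le_of_lt hfa, le_of_lt hpos⟩
    obtain ⟨t, ht, hft⟩ := intermediate_value_Icc hab hf.continuousOn h0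
    exact h t ht hft

lemma sign_taylor_right {f : ℝ → ℝ} (hf : ContDiff ℝ (⊤ : ℕ∞) f) {t₀ : ℝ} {k : ℕ} (hk : 1 ≤ k)
    (h0 : ∀ j < k, iteratedDeriv j f t₀ = 0) (hD : iteratedDeriv k f t₀ ≠ 0)
    {ε : ℝ} (hε : 0 < ε) (hne : ∀ t ∈ Set.Ioc t₀ (t₀ + ε), f t ≠ 0) :
    (0 < f (t₀ + ε) ↔ 0 < iteratedDeriv k f t₀) := by
  obtain ⟨m, rfl⟩ : ∃ m, k = m + 1 := ⟨k - 1, (Nat.succ_pred_eq_of_pos hk).symm⟩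
  set D := iteratedDeriv (m + 1) f t₀ with hDdef
  have hcont : Continuous (iteratedDeriv (m + 1) f) := hf.continuous_iteratedDeriv _ (by exact_mod_cast le_top)
  obtain ⟨δ, hδpos, hδ⟩ := Metric.continuousAt_iff.mp hcont.continuousAt |D| (abs_pos.mpr hD)
  set h : ℝ := min (δ / 2) ε with hhdef
  have hhpos : 0 < h := lt_min (by linarith) hε
  have hhε : h ≤ ε := min_le_right _ _
  have hlt : t₀ < t₀ + h := by linarith
  have hUD : UniqueDiffOn ℝ (Set.Icc t₀ (t₀ + h)) := uniqueDiffOn_Icc hlt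
  have hfCO : ContDiffOn ℝ m f (Set.Icc t₀ (t₀ + h)) := (hf.of_le (by exact_mod_cast le_top)).contDiffOn
  have hdiff : DifferentiableOn ℝ
      (iteratedDerivWithin m f (Set.Icc t₀ (t₀ + h))) (Set.Ioo t₀ (t₀ + h)) := by
    have hdiff' : DifferentiableOn ℝ (iteratedDeriv m f) (Set.Ioo t₀ (t₀ + h)) :=
      (hf.differentiable_iteratedDeriv m (by
        exact_mod_cast lt_top_iff_ne_top.mpr (by simp))).differentiableOn
    refine hdiff'.congr ?_
    intro x hx
    exact iteratedDerivWithin_eq_iteratedDeriv' hf hUD (Set.Ioo_subset_Icc_self hx) m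
  obtain ⟨ξ, hξ, heq⟩ := taylor_mean_remainder_lagrange (n := m) (x := t₀ + h) (x₀ := t₀)
    (ne_of_lt hlt) (by rw [Set.uIcc_of_le hlt.le]; exact hfCO)
    (by rw [Set.uIcc_of_le hlt.le, Set.uIoo_of_le hlt.le]; exact hdiff)
  rw [Set.uIcc_of_le hlt.le] at heq
  rw [Set.uIoo_of_le hlt.le] at hξ
  have htaylor : taylorWithinEval f m (Set.Icc t₀ (t₀ + h)) t₀ (t₀ + h) = 0 := by
    rw [taylor_within_apply]
    apply Finset.sum_eq_zero
    intro j hj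
    have hjm : j < m + 1 := Finset.mem_range.mp hj
    have : iteratedDerivWithin j f (Set.Icc t₀ (t₀ + h)) t₀ = 0 := by
      rw [iteratedDerivWithin_eq_iteratedDeriv' hf hUD
        (Set.mem_Icc.mpr ⟨le_refl _, le_of_lt hlt⟩) j]
      exact h0 j hjm
    rw [this, smul_zero]
  rw [htaylor, sub_zero] at heq
  have hξIcc : ξ ∈ Set.Icc t₀ (t₀ + h) := Set.Ioo_subset_Icc_self hξ
  rw [iteratedDerivWithin_eq_iteratedDeriv' hf hUD hξIcc (m + 1)] at heq
  have hdist : dist ξ t₀ < δ := by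
    have h1 : t₀ < ξ := hξ.1
    have h2 : ξ < t₀ + h := hξ.2
    have : |ξ - t₀| < δ := by
      rw [abs_of_pos (by linarith)]
      have : h ≤ δ / 2 := min_le_left _ _
      linarith
    simpa [Real.dist_eq] using this
  have hsign : (0 < iteratedDeriv (m + 1) f ξ ↔ 0 < D) := by
    apply sign_iff_of_close
    have := hδ hdist
    simpa [Real.dist_eq] using this
  have hc : (0:ℝ) < (t₀ + h - t₀) ^ (m + 1) * (((m+1).factorial : ℝ))⁻¹ :=
    mul_pos (pow_pos (by linarith) (m+1))
      (inv_pos.mpr (by exact_mod_cast Nat.factorial_pos (m+1)))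
  have hfh : (0 < f (t₀ + h) ↔ 0 < D) := by
    rw [heq, div_eq_mul_inv, mul_assoc, ← hsign]
    constructor
    · intro hp
      by_contra hna
      push_neg at hna
      have := mul_nonpos_of_nonpos_of_nonneg hna hc.le
      linarith
    · intro hp
      exact mul_pos hp hc
  have hstep : (0 < f (t₀ + h) ↔ 0 < f (t₀ + ε)) := by
    apply sign_const_of_ne_zero hf.continuous (by linarith)
    intro t ht
    exact hne t ⟨by linarith [ht.1], ht.2⟩
  rw [← hstep, hfh]

lemma sign_taylor_left {f : ℝ → ℝ} (hf : ContDiff ℝ (⊤ : ℕ∞) f) {t₀ : ℝ} {k : ℕ} (hk : 1 ≤ k)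
    (h0 : ∀ j < k, iteratedDeriv j f t₀ = 0) (hD : iteratedDeriv k f t₀ ≠ 0)
    {ε : ℝ} (hε : 0 < ε) (hne : ∀ t ∈ Set.Ico (t₀ - ε) t₀, f t ≠ 0) :
    (0 < f (t₀ - ε) ↔ 0 < (-1) ^ k * iteratedDeriv k f t₀) := by
  set F : ℝ → ℝ := fun x => f (2 * t₀ + -x) with hFdef
  have hFd : ∀ (j : ℕ) (x : ℝ), iteratedDeriv j F x = (-1:ℝ)^j * iteratedDeriv j f (2*t₀ + -x) := by
    intro j x
    have h1 := iteratedDeriv_comp_neg j (fun y => f (2 * t₀ + y)) x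
    have h2 := iteratedDeriv_comp_const_add j f (2 * t₀)
    rw [hFdef]
    calc iteratedDeriv j (fun x => f (2 * t₀ + -x)) x
        = (-1:ℝ)^j • iteratedDeriv j (fun y => f (2 * t₀ + y)) (-x) := h1
      _ = (-1:ℝ)^j * iteratedDeriv j f (2*t₀ + -x) := by rw [h2]; simp [smul_eq_mul]
  have hFsmooth : ContDiff ℝ (⊤ : ℕ∞) F :=
    hf.comp ((contDiff_const).add contDiff_id.neg)
  have h0F : ∀ j < k, iteratedDeriv j F t₀ = 0 := by
    intro j hj
    rw [hFd j t₀, show 2 * t₀ + -t₀ = t₀ by ring, h0 j hj, mul_zero]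
  have hDF : iteratedDeriv k F t₀ ≠ 0 := by
    rw [hFd k t₀, show 2 * t₀ + -t₀ = t₀ by ring]
    intro hc
    rcases mul_eq_zero.mp hc with h | h
    · exact absurd h (by positivity)
    · exact hD h
  have hneF : ∀ t ∈ Set.Ioc t₀ (t₀ + ε), F t ≠ 0 := by
    intro t ht
    have : 2 * t₀ + -t ∈ Set.Ico (t₀ - ε) t₀ := ⟨by linarith [ht.2], by linarith [ht.1]⟩
    exact hne _ this
  have := sign_taylor_right hFsmooth hk h0F hDF hε hneF
  rw [show F (t₀ + ε) = f (t₀ - ε) by rw [hFdef]; ring_nf] at this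
  rw [hFd k t₀, show 2 * t₀ + -t₀ = t₀ by ring] at this
  exact this

end AuxTaylor


/-- **Jump formulas for the coindex via partial signatures** (real-analytic, diagonalizable
case). The jumps of the coindex of `L` across the unique degeneracy instant `t₀` are
computed by the partial indices, coindices and signatures of the forms `B_k` on `W_k`. -/
theorem coindex_jumps_eq_partial_signatures
    {E : Type*} [NormedAddCommGroup E] [InnerProductSpace ℝ E] [FiniteDimensional ℝ E]
    (L : ℝ → E →L[ℝ] E) (t₀ ε : ℝ) (hε : 0 < ε)
    (hana : ∀ t, AnalyticAt ℝ L t)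
    (hsym : ∀ t, ∀ x y : E, ⟪L t x, y⟫ = ⟪x, L t y⟫)
    (huniq : ∀ t ∈ Set.Icc (t₀ - ε) (t₀ + ε), t ≠ t₀ → Function.Injective ⇑(L t))
    (lam : Fin (Module.finrank ℝ E) → ℝ → ℝ)
    (v : Fin (Module.finrank ℝ E) → ℝ → E)
    (hlam : ∀ i, ContDiff ℝ (⊤ : ℕ∞) (lam i)) (hv : ∀ i, ContDiff ℝ (⊤ : ℕ∞) (v i))
    (heig : ∀ i t, L t (v i t) = lam i t • v i t)
    (hON : ∀ t, Orthonormal ℝ fun i => v i t)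
    (hord : ∀ i, (∃ t, lam i t ≠ lam i t₀) → ∃ m, iteratedDeriv m (lam i) t₀ ≠ 0)
    (Bk : ℕ → E → E → ℝ)
    (hBk : ∀ k, 1 ≤ k → ∀ u : ℝ → E, IsRootFn L t₀ k u → ∀ w ∈ Wk L t₀ k,
      Bk k (u t₀) w
        = (Nat.factorial k : ℝ)⁻¹ * ⟪iteratedDeriv k (fun t => L t (u t)) t₀, w⟫) :
    ∃ N : ℕ,
      (∀ k, N < k → posIndexOn (Bk k) (Wk L t₀ k) = 0 ∧ negIndexOn (Bk k) (Wk L t₀ k) = 0) ∧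
      ((posIndexOn (fun x y => ⟪L (t₀ + ε) x, y⟫) Set.univ : ℤ)
          - (posIndexOn (fun x y => ⟪L t₀ x, y⟫) Set.univ : ℤ)
        = ∑ k ∈ Finset.Icc 1 N, (posIndexOn (Bk k) (Wk L t₀ k) : ℤ)) ∧
      ((posIndexOn (fun x y => ⟪L t₀ x, y⟫) Set.univ : ℤ)
          - (posIndexOn (fun x y => ⟪L (t₀ - ε) x, y⟫) Set.univ : ℤ)
        = -∑ k ∈ Finset.Icc 1 N,
            (if Odd k then (negIndexOn (Bk k) (Wk L t₀ k) : ℤ)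
              else (posIndexOn (Bk k) (Wk L t₀ k) : ℤ))) ∧
      ((posIndexOn (fun x y => ⟪L (t₀ + ε) x, y⟫) Set.univ : ℤ)
          - (posIndexOn (fun x y => ⟪L (t₀ - ε) x, y⟫) Set.univ : ℤ)
        = ∑ k ∈ Finset.Icc 1 N,
            (if Odd k then (posIndexOn (Bk k) (Wk L t₀ k) : ℤ)
                - (negIndexOn (Bk k) (Wk L t₀ k) : ℤ)
              else 0)) := by
    classical
  -- smoothness of L
  have hL : ContDiff ℝ (⊤ : ℕ∞) L := contDiff_iff_contDiffAt.mpr fun t => (hana t).contDiffAt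
  -- eigenvectors are nonzero
  have hvne : ∀ i (t : ℝ), v i t ≠ 0 := by
    intro i t h
    have h1 := (hON t).1 i
    simp only [h, norm_zero] at h1
    exact zero_ne_one h1
  -- eigenvalues do not vanish away from t₀
  have hlamne : ∀ i, ∀ t ∈ Set.Icc (t₀ - ε) (t₀ + ε), t ≠ t₀ → lam i t ≠ 0 := by
    intro i t ht htne h0
    have h1 : L t (v i t) = L t 0 := by rw [heig, h0, zero_smul, map_zero]
    exact hvne i t (huniq t ht htne h1)
  have htpmem : t₀ + ε ∈ Set.Icc (t₀ - ε) (t₀ + ε) := ⟨by linarith, le_refl _⟩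
  have htmmem : t₀ - ε ∈ Set.Icc (t₀ - ε) (t₀ + ε) := ⟨le_refl _, by linarith⟩
  -- expansion in the orthonormal basis
  have hexp : ∀ (t : ℝ) (x : E), ∑ i, ⟪v i t, x⟫ • v i t = x := by
    intro t x
    have hsp : ⊤ ≤ Submodule.span ℝ (Set.range fun i => v i t) :=
      ((hON t).linearIndependent.span_eq_top_of_card_eq_finrank'
        (by simp [Fintype.card_fin])).ge
    have := (OrthonormalBasis.mk (hON t) hsp).sum_repr' x
    simpa [OrthonormalBasis.coe_mk] using this
  -- the order of vanishing and the leading derivative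
  set K : Fin (Module.finrank ℝ E) → ℕ := fun i =>
    if h : ∃ m, iteratedDeriv m (lam i) t₀ ≠ 0 then Nat.find h else 0 with hKdef
  set D : Fin (Module.finrank ℝ E) → ℝ := fun i => iteratedDeriv (K i) (lam i) t₀ with hDdef
  have hKspec : ∀ i, lam i t₀ = 0 →
      (1 ≤ K i ∧ D i ≠ 0 ∧ ∀ j < K i, iteratedDeriv j (lam i) t₀ = 0) := by
    intro i hi
    have hex : ∃ m, iteratedDeriv m (lam i) t₀ ≠ 0 := by
      apply hord i
      refine ⟨t₀ + ε, ?_⟩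
      rw [hi]
      exact hlamne i _ htpmem (by intro h; linarith)
    have hKi : K i = Nat.find hex := by rw [hKdef]; simp only [dif_pos hex]
    have hspec : iteratedDeriv (K i) (lam i) t₀ ≠ 0 := by rw [hKi]; exact Nat.find_spec hex
    have hmin : ∀ j < K i, iteratedDeriv j (lam i) t₀ = 0 := by
      intro j hj
      rw [hKi] at hj
      by_contra hne
      exact absurd (Nat.find_min hex hj) (by simp [hne])
    refine ⟨?_, hspec, hmin⟩
    rcases Nat.eq_zero_or_pos (K i) with h0 | h1
    · exfalso
      apply hspec
      rw [h0, iteratedDeriv_zero]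
      exact hi
    · exact h1

  -- sign of the eigenvalues at the endpoints
  have hsplus : ∀ i, (0 < lam i (t₀ + ε) ↔
      (if lam i t₀ = 0 then 0 < D i else 0 < lam i t₀)) := by
    intro i
    by_cases hz : lam i t₀ = 0
    · rw [if_pos hz]
      obtain ⟨hK1, hD, hK0⟩ := hKspec i hz
      exact sign_taylor_right (hlam i) hK1 hK0 hD hε
        (fun t ht => hlamne i t ⟨by linarith [ht.1], ht.2⟩ (ne_of_gt ht.1))
    · rw [if_neg hz]
      have h := sign_const_of_ne_zero (hlam i).continuous
        (le_of_lt (by linarith : t₀ < t₀ + ε)) (fun t ht => by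
          by_cases htt : t = t₀
          · rw [htt]; exact hz
          · exact hlamne i t ⟨by linarith [ht.1], ht.2⟩ htt)
      exact h.symm
  have hsminus : ∀ i, (0 < lam i (t₀ - ε) ↔
      (if lam i t₀ = 0 then 0 < (-1 : ℝ) ^ (K i) * D i else 0 < lam i t₀)) := by
    intro i
    by_cases hz : lam i t₀ = 0
    · rw [if_pos hz]
      obtain ⟨hK1, hD, hK0⟩ := hKspec i hz
      exact sign_taylor_left (hlam i) hK1 hK0 hD hε
        (fun t ht => hlamne i t ⟨ht.1, by linarith [ht.2]⟩ (ne_of_lt ht.2))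
    · rw [if_neg hz]
      exact sign_const_of_ne_zero (hlam i).continuous
        (le_of_lt (by linarith : t₀ - ε < t₀)) (fun t ht => by
          by_cases htt : t = t₀
          · rw [htt]; exact hz
          · exact hlamne i t ⟨ht.1, by linarith [ht.2]⟩ htt)
  -- coefficients of root functions are supported on high-order degenerate directions
  have hWkSub : ∀ (k : ℕ) (u : ℝ → E), IsRootFn L t₀ k u →
      ∀ i, ⟪v i t₀, u t₀⟫ ≠ 0 → lam i t₀ = 0 ∧ k ≤ K i := by
    rintro k u ⟨hu_sm, hu0, hu_div⟩ i hc
    have hfsm : ContDiff ℝ (⊤ : ℕ∞) (fun t => L t (u t)) := hL.clm_apply hu_sm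
    have hz : lam i t₀ = 0 := by
      have h1 : ⟪L t₀ (u t₀), v i t₀⟫ = 0 := by rw [hu0]; simp
      have h2 : ⟪L t₀ (u t₀), v i t₀⟫ = lam i t₀ * ⟪v i t₀, u t₀⟫ := by
        rw [hsym t₀ (u t₀) (v i t₀), heig, real_inner_smul_right, real_inner_comm]
      rw [h2] at h1
      exact (mul_eq_zero.mp h1).resolve_right hc
    refine ⟨hz, ?_⟩
    by_contra hlt
    push_neg at hlt
    obtain ⟨hK1, hD, hK0⟩ := hKspec i hz
    have hgsm : ContDiff ℝ (⊤ : ℕ∞) (fun t => ⟪v i t, u t⟫) :=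
      contDiff_bil (innerSL ℝ) (hv i) hu_sm
    have heqf : (fun t => (innerSL ℝ (E := E)) (L t (u t)) (v i t))
        = fun t => (ContinuousLinearMap.mul ℝ ℝ) (lam i t) (⟪v i t, u t⟫) := by
      funext t
      simp only [innerSL_apply_apply, ContinuousLinearMap.mul_apply']
      rw [hsym t (u t) (v i t), heig, real_inner_smul_right, real_inner_comm]
    have hA : iteratedDeriv (K i) (fun t => (innerSL ℝ (E := E)) (L t (u t)) (v i t)) t₀ = 0 :=
      iteratedDeriv_bil_zero (innerSL ℝ) (K i) (fun t => L t (u t)) (fun t => v i t)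
        hfsm (hv i) (fun a ha => hu_div a (by omega))
    have hB : iteratedDeriv (K i)
        (fun t => (ContinuousLinearMap.mul ℝ ℝ) (lam i t) (⟪v i t, u t⟫)) t₀
        = (ContinuousLinearMap.mul ℝ ℝ) (D i) (⟪v i t₀, u t₀⟫) :=
      iteratedDeriv_bil_eq (ContinuousLinearMap.mul ℝ ℝ) (K i) (lam i)
        (fun t => ⟪v i t, u t⟫) (hlam i) hgsm (fun a ha => hK0 a ha)
    rw [heqf, hB] at hA
    simp only [ContinuousLinearMap.mul_apply'] at hA
    exact hc ((mul_eq_zero.mp hA).resolve_left hD)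
  -- iterated derivative of the zero function
  have hzero_fn : ∀ (j : ℕ) (x : ℝ), iteratedDeriv j (fun _ : ℝ => (0 : E)) x = 0 := by
    intro j x
    rw [iteratedDeriv_eq_iteratedFDeriv, iteratedFDeriv_zero_fun]
    simp
  -- zero is in every Wk
  have hW0 : ∀ k, (0 : E) ∈ Wk L t₀ k := by
    intro k
    refine ⟨fun _ => 0, ⟨contDiff_const, by simp, ?_⟩, rfl⟩
    intro j hj
    have : (fun t => L t ((0:E))) = fun _ : ℝ => (0 : E) := by
      funext t; simp
    rw [this]
    exact hzero_fn j t₀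
  -- the span submodules
  set Mk : ℕ → Submodule ℝ E := fun k =>
    Submodule.span ℝ ((fun i => v i t₀) '' {i | lam i t₀ = 0 ∧ k ≤ K i}) with hMkdef
  -- iterated derivative of constant smul
  have hconst_smul : ∀ (j : ℕ) (c : ℝ) (f : ℝ → E), ContDiff ℝ (⊤ : ℕ∞) f →
      iteratedDeriv j (fun t => c • f t) t₀ = c • iteratedDeriv j f t₀ := by
    intro j c f hf
    have : (fun t => c • f t) = c • f := rfl
    rw [this, ← iteratedDerivWithin_univ, ← iteratedDerivWithin_univ]
    exact iteratedDerivWithin_const_smul (Set.mem_univ t₀) uniqueDiffOn_univ c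
      ((hf.of_le (by exact_mod_cast le_top)).contDiffWithinAt)
  -- Wk equals the span
  have hWkEq : ∀ k, 1 ≤ k → Wk L t₀ k = ↑(Mk k) := by
    intro k hk
    apply Set.eq_of_subset_of_subset
    · rintro x ⟨u, hroot, rfl⟩
      rw [← hexp t₀ (u t₀)]
      apply Submodule.sum_mem
      intro i _
      by_cases hci : ⟪v i t₀, u t₀⟫ = 0
      · rw [hci, zero_smul]; exact Submodule.zero_mem _
      · exact Submodule.smul_mem _ _
          (Submodule.subset_span ⟨i, hWkSub k u hroot i hci, rfl⟩)
    · intro x hx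
      refine Submodule.span_induction ?_ ?_ ?_ ?_ hx
      · rintro y ⟨i, ⟨hz, hKi⟩, rfl⟩
        refine ⟨fun t => v i t, ⟨hv i, by rw [heig, hz, zero_smul], ?_⟩, rfl⟩
        intro j hj
        have heqf : (fun t => L t (v i t))
            = fun t => (ContinuousLinearMap.lsmul ℝ ℝ : ℝ →L[ℝ] E →L[ℝ] E) (lam i t) (v i t) := by
          funext t
          simp only [ContinuousLinearMap.lsmul_apply]
          exact heig i t
        rw [heqf]
        exact iteratedDeriv_bil_zero _ j (lam i) (fun t => v i t) (hlam i) (hv i)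
          (fun a ha => (hKspec i hz).2.2 a (by omega))
      · exact hW0 k
      · rintro y z - - ⟨u₁, h1, e1⟩ ⟨u₂, h2, e2⟩
        refine ⟨fun t => u₁ t + u₂ t, ⟨h1.1.add h2.1, ?_, ?_⟩, show u₁ t₀ + u₂ t₀ = y + z by rw [e1, e2]⟩
        · show L t₀ (u₁ t₀ + u₂ t₀) = 0
          rw [map_add, h1.2.1, h2.2.1, add_zero]
        · intro j hj
          have : (fun t => L t (u₁ t + u₂ t))
              = fun t => (L t (u₁ t)) + (L t (u₂ t)) := by
            funext t; simp [map_add]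
          rw [this, iteratedDeriv_add' (hL.clm_apply h1.1) (hL.clm_apply h2.1),
            h1.2.2 j hj, h2.2.2 j hj, add_zero]
      · rintro c y - ⟨u₁, h1, e1⟩
        refine ⟨fun t => c • u₁ t, ⟨h1.1.const_smul c, ?_, ?_⟩, show c • u₁ t₀ = c • y by rw [e1]⟩
        · show L t₀ (c • u₁ t₀) = 0
          rw [map_smul, h1.2.1, smul_zero]
        · intro j hj
          have : (fun t => L t (c • u₁ t)) = fun t => c • (L t (u₁ t)) := by
            funext t; simp [map_smul]
          rw [this, hconst_smul j c _ (hL.clm_apply h1.1), h1.2.2 j hj, smul_zero]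

  -- the coindex of L t is the number of positive eigenvalues
  have hposL : ∀ t : ℝ, posIndexOn (fun x y => ⟪L t x, y⟫) Set.univ
      = (Finset.univ.filter fun i => 0 < lam i t).card := by
    intro t
    have hB : ∀ x ∈ (⊤ : Submodule ℝ E), ⟪L t x, x⟫ = ∑ i, lam i t * ⟪x, v i t⟫ ^ 2 := by
      intro x _
      have h1 : ⟪L t x, x⟫ = ⟪L t x, ∑ i, ⟪v i t, x⟫ • v i t⟫ := by rw [hexp t x]
      rw [h1, inner_sum]
      apply Finset.sum_congr rfl
      intro i _
      rw [real_inner_smul_right, hsym t x (v i t), heig, real_inner_smul_right,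
        real_inner_comm (v i t) x]
      ring
    have h := posIndexOn_diag (hON t) (fun i => lam i t) (⊤ : Submodule ℝ E)
      (fun x y => ⟪L t x, y⟫) hB (fun i _ => Submodule.mem_top)
    simpa using h
  -- the diagonal coefficients of the forms Bk
  set d' : ℕ → Fin (Module.finrank ℝ E) → ℝ := fun k i =>
    if lam i t₀ = 0 ∧ K i = k then (k.factorial : ℝ)⁻¹ * D i else 0 with hd'def
  have hBdiag : ∀ k, 1 ≤ k → ∀ x ∈ Mk k, Bk k x x = ∑ i, d' k i * ⟪x, v i t₀⟫ ^ 2 := by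
    intro k hk x hxM
    obtain ⟨u, hroot, hu⟩ : x ∈ Wk L t₀ k := by rw [hWkEq k hk]; exact hxM
    have hfsm : ContDiff ℝ (⊤ : ℕ∞) (fun t => L t (u t)) := hL.clm_apply hroot.1
    have hBval := hBk k hk u hroot x (by rw [hWkEq k hk]; exact hxM)
    rw [hu] at hBval
    rw [hBval]
    set F := iteratedDeriv k (fun t => L t (u t)) t₀ with hF
    have h2 : ⟪F, x⟫ = ∑ i, ⟪v i t₀, x⟫ * ⟪F, v i t₀⟫ := by
      conv_lhs => rw [← hexp t₀ x]
      rw [inner_sum]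
      exact Finset.sum_congr rfl fun i _ => by rw [real_inner_smul_right]
    have hterm : ∀ i, (k.factorial : ℝ)⁻¹ * (⟪v i t₀, x⟫ * ⟪F, v i t₀⟫)
        = d' k i * ⟪x, v i t₀⟫ ^ 2 := by
      intro i
      by_cases hci : ⟪v i t₀, x⟫ = 0
      · rw [show ⟪x, v i t₀⟫ = 0 from by rw [real_inner_comm]; exact hci, hci]
        ring
      · obtain ⟨hz, hKi⟩ := hWkSub k u hroot i (by rw [hu]; exact hci)
        have hTeq : iteratedDeriv k (fun t => (innerSL ℝ (E := E)) (L t (u t)) (v i t)) t₀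
            = (innerSL ℝ) F (v i t₀) :=
          iteratedDeriv_bil_eq (innerSL ℝ) k _ _ hfsm (hv i) (fun a ha => hroot.2.2 a ha)
        have heqf : (fun t => (innerSL ℝ (E := E)) (L t (u t)) (v i t))
            = fun t => (ContinuousLinearMap.mul ℝ ℝ) (lam i t) (⟪v i t, u t⟫) := by
          funext t
          simp only [innerSL_apply_apply, ContinuousLinearMap.mul_apply']
          rw [hsym t (u t) (v i t), heig, real_inner_smul_right, real_inner_comm]
        have hgsm : ContDiff ℝ (⊤ : ℕ∞) (fun t => ⟪v i t, u t⟫) :=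
          contDiff_bil (innerSL ℝ) (hv i) hroot.1
        rcases eq_or_lt_of_le hKi with hKeq | hKlt
        · -- K i = k : the term contributes D i
          have hT2 : iteratedDeriv k
              (fun t => (ContinuousLinearMap.mul ℝ ℝ) (lam i t) (⟪v i t, u t⟫)) t₀
              = (ContinuousLinearMap.mul ℝ ℝ) (iteratedDeriv k (lam i) t₀) (⟪v i t₀, u t₀⟫) :=
            iteratedDeriv_bil_eq (ContinuousLinearMap.mul ℝ ℝ) k (lam i)
              (fun t => ⟪v i t, u t⟫) (hlam i) hgsm
              (fun a ha => (hKspec i hz).2.2 a (by omega))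
          have hDk : iteratedDeriv k (lam i) t₀ = D i := by
            simp only [hDdef]; rw [← hKeq]
          have hcond : lam i t₀ = 0 ∧ K i = k := ⟨hz, hKeq.symm⟩
          have hTval : ⟪F, v i t₀⟫ = D i * ⟪v i t₀, x⟫ := by
            have h3 : (innerSL ℝ) F (v i t₀) = (ContinuousLinearMap.mul ℝ ℝ)
                (iteratedDeriv k (lam i) t₀) (⟪v i t₀, u t₀⟫) := by
              rw [← hTeq, heqf, hT2]
            simpa only [innerSL_apply_apply, ContinuousLinearMap.mul_apply', hDk, hu] using h3
          rw [hTval, hd'def]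
          simp only [if_pos hcond]
          rw [real_inner_comm x (v i t₀)]
          ring
        · -- k < K i : the term vanishes
          have hT0 : iteratedDeriv k
              (fun t => (ContinuousLinearMap.mul ℝ ℝ) (lam i t) (⟪v i t, u t⟫)) t₀ = 0 :=
            iteratedDeriv_bil_zero (ContinuousLinearMap.mul ℝ ℝ) k (lam i)
              (fun t => ⟪v i t, u t⟫) (hlam i) hgsm
              (fun a ha => (hKspec i hz).2.2 a (by omega))
          have hTval : ⟪F, v i t₀⟫ = 0 := by
            have h3 : (innerSL ℝ) F (v i t₀) = 0 := by rw [← hTeq, heqf, hT0]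
            simpa only [innerSL_apply_apply] using h3
          have hcond : ¬ (lam i t₀ = 0 ∧ K i = k) := by
            rintro ⟨-, hKk⟩; omega
          rw [hTval, hd'def]
          simp only [if_neg hcond]
          ring
    rw [h2, Finset.mul_sum]
    exact Finset.sum_congr rfl fun i _ => hterm i
  -- positive index of Bk
  have hfactpos : ∀ k : ℕ, (0:ℝ) < (k.factorial : ℝ)⁻¹ :=
    fun k => inv_pos.mpr (by exact_mod_cast k.factorial_pos)
  have hPos : ∀ k, 1 ≤ k → posIndexOn (Bk k) (Wk L t₀ k)
      = (Finset.univ.filter fun i => (lam i t₀ = 0 ∧ 0 < D i) ∧ K i = k).card := by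
    intro k hk
    rw [hWkEq k hk]
    rw [posIndexOn_diag (hON t₀) (d' k) (Mk k) (Bk k) (hBdiag k hk) (fun i hdi => by
      by_cases hcond : lam i t₀ = 0 ∧ K i = k
      · exact Submodule.subset_span ⟨i, ⟨hcond.1, le_of_eq hcond.2.symm⟩, rfl⟩
      · rw [hd'def] at hdi; simp only [if_neg hcond] at hdi; exact absurd hdi (lt_irrefl 0))]
    have heq : (Finset.univ.filter fun i => 0 < d' k i)
        = Finset.univ.filter fun i => (lam i t₀ = 0 ∧ 0 < D i) ∧ K i = k := by
      apply Finset.filter_congr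
      intro i _
      by_cases hcond : lam i t₀ = 0 ∧ K i = k
      · simp only [hd'def, if_pos hcond]
        have hfp := hfactpos k
        constructor
        · intro h
          refine ⟨⟨hcond.1, ?_⟩, hcond.2⟩
          by_contra hD
          push_neg at hD
          nlinarith
        · rintro ⟨⟨-, hD⟩, -⟩
          exact mul_pos hfp hD
      · simp only [hd'def, if_neg hcond]
        constructor
        · intro h; exact absurd h (lt_irrefl 0)
        · rintro ⟨⟨h1, -⟩, h2⟩; exact absurd ⟨h1, h2⟩ hcond
    rw [heq]
  -- negative index of Bk
  have hNeg : ∀ k, 1 ≤ k → negIndexOn (Bk k) (Wk L t₀ k)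
      = (Finset.univ.filter fun i => (lam i t₀ = 0 ∧ D i < 0) ∧ K i = k).card := by
    intro k hk
    rw [negIndexOn_eq, hWkEq k hk]
    have hBneg : ∀ x ∈ Mk k, -Bk k x x = ∑ i, (-d' k i) * ⟪x, v i t₀⟫ ^ 2 := by
      intro x hx
      rw [hBdiag k hk x hx, ← Finset.sum_neg_distrib]
      exact Finset.sum_congr rfl fun i _ => by ring
    rw [posIndexOn_diag (hON t₀) (fun i => -d' k i) (Mk k) (fun x y => -Bk k x y)
      hBneg (fun i hdi => by
        by_cases hcond : lam i t₀ = 0 ∧ K i = k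
        · exact Submodule.subset_span ⟨i, ⟨hcond.1, le_of_eq hcond.2.symm⟩, rfl⟩
        · simp only [hd'def, if_neg hcond] at hdi
          exact absurd hdi (by simp))]
    have heq : (Finset.univ.filter fun i => 0 < -d' k i)
        = Finset.univ.filter fun i => (lam i t₀ = 0 ∧ D i < 0) ∧ K i = k := by
      apply Finset.filter_congr
      intro i _
      by_cases hcond : lam i t₀ = 0 ∧ K i = k
      · simp only [hd'def, if_pos hcond]
        have hfp := hfactpos k
        constructor
        · intro h
          refine ⟨⟨hcond.1, ?_⟩, hcond.2⟩
          by_contra hD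
          push_neg at hD
          nlinarith
        · rintro ⟨⟨-, hD⟩, -⟩
          nlinarith
      · simp only [hd'def, if_neg hcond]
        constructor
        · intro h; simp at h
        · rintro ⟨⟨h1, -⟩, h2⟩; exact absurd ⟨h1, h2⟩ hcond
    rw [heq]

  -- the threshold N
  set N : ℕ := Finset.univ.sup K with hNdef
  have hKN : ∀ i, K i ≤ N := fun i => Finset.le_sup (Finset.mem_univ i)
  -- counting the positive eigenvalues at t₀ ± ε
  have hcount_plus : (Finset.univ.filter fun i => 0 < lam i (t₀ + ε)).card
      = (Finset.univ.filter fun i => lam i t₀ = 0 ∧ 0 < D i).card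
        + (Finset.univ.filter fun i => 0 < lam i t₀).card := by
    have h1 : (Finset.univ.filter fun i => 0 < lam i (t₀ + ε))
        = Finset.univ.filter fun i => (lam i t₀ = 0 ∧ 0 < D i) ∨ (0 < lam i t₀) := by
      apply Finset.filter_congr
      intro i _
      rw [hsplus i]
      by_cases hz : lam i t₀ = 0
      · simp [hz]
      · simp [hz]
    rw [h1, Finset.filter_or, Finset.card_union_of_disjoint]
    rw [Finset.disjoint_left]
    rintro i hi1 hi2
    simp only [Finset.mem_filter] at hi1 hi2
    rw [hi1.2.1] at hi2
    exact lt_irrefl 0 hi2.2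
  have hcount_minus : (Finset.univ.filter fun i => 0 < lam i (t₀ - ε)).card
      = (Finset.univ.filter fun i => lam i t₀ = 0 ∧ 0 < (-1:ℝ) ^ (K i) * D i).card
        + (Finset.univ.filter fun i => 0 < lam i t₀).card := by
    have h1 : (Finset.univ.filter fun i => 0 < lam i (t₀ - ε))
        = Finset.univ.filter fun i =>
            (lam i t₀ = 0 ∧ 0 < (-1:ℝ) ^ (K i) * D i) ∨ (0 < lam i t₀) := by
      apply Finset.filter_congr
      intro i _
      rw [hsminus i]
      by_cases hz : lam i t₀ = 0
      · simp [hz]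
      · simp [hz]
    rw [h1, Finset.filter_or, Finset.card_union_of_disjoint]
    rw [Finset.disjoint_left]
    rintro i hi1 hi2
    simp only [Finset.mem_filter] at hi1 hi2
    rw [hi1.2.1] at hi2
    exact lt_irrefl 0 hi2.2
  -- fiberwise decomposition over the order k
  have hfib1 : (Finset.univ.filter fun i => lam i t₀ = 0 ∧ 0 < D i).card
      = ∑ k ∈ Finset.Icc 1 N,
          (Finset.univ.filter fun i => (lam i t₀ = 0 ∧ 0 < D i) ∧ K i = k).card := by
    rw [Finset.card_eq_sum_card_fiberwise (f := K) (t := Finset.Icc 1 N) (fun i hi => by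
      simp only [Finset.coe_filter, Set.mem_setOf_eq] at hi
      exact Finset.mem_Icc.mpr ⟨(hKspec i hi.2.1).1, hKN i⟩)]
    exact Finset.sum_congr rfl fun k _ => by rw [Finset.filter_filter]
  have hfib2 : (Finset.univ.filter fun i => lam i t₀ = 0 ∧ 0 < (-1:ℝ) ^ (K i) * D i).card
      = ∑ k ∈ Finset.Icc 1 N,
          (if Odd k then
            (Finset.univ.filter fun i => (lam i t₀ = 0 ∧ D i < 0) ∧ K i = k).card
          else
            (Finset.univ.filter fun i => (lam i t₀ = 0 ∧ 0 < D i) ∧ K i = k).card) := by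
    rw [Finset.card_eq_sum_card_fiberwise (f := K) (t := Finset.Icc 1 N) (fun i hi => by
      simp only [Finset.coe_filter, Set.mem_setOf_eq] at hi
      exact Finset.mem_Icc.mpr ⟨(hKspec i hi.2.1).1, hKN i⟩)]
    apply Finset.sum_congr rfl
    intro k _
    rw [Finset.filter_filter]
    by_cases hodd : Odd k
    · rw [if_pos hodd]
      congr 1
      apply Finset.filter_congr
      intro i _
      constructor
      · rintro ⟨⟨hz, hp⟩, hKk⟩
        refine ⟨⟨hz, ?_⟩, hKk⟩
        rw [hKk, hodd.neg_one_pow] at hp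
        linarith
      · rintro ⟨⟨hz, hn⟩, hKk⟩
        refine ⟨⟨hz, ?_⟩, hKk⟩
        rw [hKk, hodd.neg_one_pow]
        linarith
    · rw [if_neg hodd]
      have heven : Even k := Nat.not_odd_iff_even.mp hodd
      congr 1
      apply Finset.filter_congr
      intro i _
      constructor
      · rintro ⟨⟨hz, hp⟩, hKk⟩
        refine ⟨⟨hz, ?_⟩, hKk⟩
        rw [hKk, heven.neg_one_pow, one_mul] at hp
        exact hp
      · rintro ⟨⟨hz, hn⟩, hKk⟩
        refine ⟨⟨hz, ?_⟩, hKk⟩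
        rw [hKk, heven.neg_one_pow, one_mul]
        exact hn
  refine ⟨N, ?_, ?_, ?_, ?_⟩
  · -- vanishing beyond N
    intro k hNk
    have hk1 : 1 ≤ k := by omega
    constructor
    · rw [hPos k hk1, Finset.card_eq_zero, Finset.filter_eq_empty_iff]
      rintro i - ⟨-, hKk⟩
      have := hKN i
      omega
    · rw [hNeg k hk1, Finset.card_eq_zero, Finset.filter_eq_empty_iff]
      rintro i - ⟨-, hKk⟩
      have := hKN i
      omega
  · -- first jump formula
    rw [hposL (t₀ + ε), hposL t₀, hcount_plus, hfib1]
    push_cast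
    rw [add_sub_cancel_right]
    apply Finset.sum_congr rfl
    intro k hk
    rw [hPos k (Finset.mem_Icc.mp hk).1]
  · -- second jump formula
    rw [hposL t₀, hposL (t₀ - ε), hcount_minus]
    have key : (((Finset.univ.filter fun i =>
          lam i t₀ = 0 ∧ 0 < (-1:ℝ) ^ (K i) * D i).card : ℕ) : ℤ)
        = ∑ k ∈ Finset.Icc 1 N,
            (if Odd k then (negIndexOn (Bk k) (Wk L t₀ k) : ℤ)
              else (posIndexOn (Bk k) (Wk L t₀ k) : ℤ)) := by
      rw [hfib2]
      push_cast
      apply Finset.sum_congr rfl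
      intro k hk
      have hk1 := (Finset.mem_Icc.mp hk).1
      by_cases hodd : Odd k
      · rw [if_pos hodd, if_pos hodd, hNeg k hk1]
      · rw [if_neg hodd, if_neg hodd, hPos k hk1]
    push_cast
    rw [← key]
    ring
  · -- third jump formula
    rw [hposL (t₀ + ε), hposL (t₀ - ε), hcount_plus, hcount_minus]
    push_cast
    have key1 : (((Finset.univ.filter fun i => lam i t₀ = 0 ∧ 0 < D i).card : ℕ) : ℤ)
        = ∑ k ∈ Finset.Icc 1 N,
            ((Finset.univ.filter fun i =>
              (lam i t₀ = 0 ∧ 0 < D i) ∧ K i = k).card : ℤ) := by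
      rw [hfib1]; push_cast; rfl
    have key2 : (((Finset.univ.filter fun i =>
          lam i t₀ = 0 ∧ 0 < (-1:ℝ) ^ (K i) * D i).card : ℕ) : ℤ)
        = ∑ k ∈ Finset.Icc 1 N,
            (if Odd k then
              ((Finset.univ.filter fun i =>
                (lam i t₀ = 0 ∧ D i < 0) ∧ K i = k).card : ℤ)
            else
              ((Finset.univ.filter fun i =>
                (lam i t₀ = 0 ∧ 0 < D i) ∧ K i = k).card : ℤ)) := by
      rw [hfib2]; push_cast; rfl
    have hLHS : (((Finset.univ.filter fun i => lam i t₀ = 0 ∧ 0 < D i).card : ℕ) : ℤ)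
          + ((Finset.univ.filter fun i => 0 < lam i t₀).card : ℤ)
          - ((((Finset.univ.filter fun i =>
              lam i t₀ = 0 ∧ 0 < (-1:ℝ) ^ (K i) * D i).card : ℕ) : ℤ)
            + ((Finset.univ.filter fun i => 0 < lam i t₀).card : ℤ))
        = (((Finset.univ.filter fun i => lam i t₀ = 0 ∧ 0 < D i).card : ℕ) : ℤ)
          - (((Finset.univ.filter fun i =>
              lam i t₀ = 0 ∧ 0 < (-1:ℝ) ^ (K i) * D i).card : ℕ) : ℤ) := by ring
    rw [hLHS, key1, key2, ← Finset.sum_sub_distrib]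
    apply Finset.sum_congr rfl
    intro k hk
    have hk1 := (Finset.mem_Icc.mp hk).1
    by_cases hodd : Odd k
    · rw [if_pos hodd, if_pos hodd, hPos k hk1, hNeg k hk1]
    · rw [if_neg hodd, if_neg hodd, sub_self]
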